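/- arXiv:1103.1063 — 2 statements merged into one kernel-verified Lean document; each statement's English description precedes it below -/
import Mathlib

section
/- Let f be a p.m.p. action of the countable group Γ on a standard Borel probability space (X, μ), and let p₁, …, p_d be positive reals summing to 1. Suppose that for every finite subset F ⊆ Γ and every δ > 0 there exists a Borel map φ : X → {1, …, d} such that for every α ∈ {1, …, d}^F, |μ({x ∈ X : φ(f_γ x) = α(γ) for all γ ∈ F}) − Π_{γ∈F} p_{α(γ)}| < δ. Then f weakly contains the Bernoulli action κ(p₁, …, p_d)^Γ. -/
open MeasureTheory Filter Topology

/-- A probability-measure-preserving action of a group `Γ` on `(X, μ)`. -/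
def IsPMPAction {Γ X : Type*} [Group Γ] [MeasurableSpace X]
    (f : Γ → X → X) (μ : Measure X) : Prop :=
  (∀ γ : Γ, MeasurePreserving (f γ) μ μ) ∧ (∀ x : X, f 1 x = x) ∧
    (∀ γ₁ γ₂ : Γ, ∀ x : X, f (γ₁ * γ₂) x = f γ₁ (f γ₂ x))

/-- The action is (essentially) free. -/
def IsFreeAction {Γ X : Type*} [MeasurableSpace X]
    (f : Γ → X → X) (μ : Measure X) : Prop :=
  ∀ᵐ x ∂μ, ∀ γ γ' : Γ, γ ≠ γ' → f γ x ≠ f γ' x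

/-- `f` (acting on `(X, μ)`) weakly contains `g` (acting on `(Y, ν)`). -/
def WeaklyContains {Γ X Y : Type*} [MeasurableSpace X] [MeasurableSpace Y]
    (f : Γ → X → X) (μ : Measure X) (g : Γ → Y → Y) (ν : Measure Y) : Prop :=
  ∀ (n : ℕ) (Ys : Fin n → Set Y), (∀ i, MeasurableSet (Ys i)) →
    ∀ (S : Finset Γ) (ε : ℝ), 0 < ε →
      ∃ Xs : Fin n → Set X, (∀ i, MeasurableSet (Xs i)) ∧
        ∀ i j : Fin n, ∀ γ ∈ S,
          |(μ (f γ '' Xs i ∩ Xs j)).toReal - (ν (g γ '' Ys i ∩ Ys j)).toReal| < ε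

/-- The (left) shift action of `Γ` on `Γ → κ`. -/
def bernoulliShift {Γ κ : Type*} [Group Γ] (γ : Γ) (ω : Γ → κ) : Γ → κ :=
  fun δ => ω (δ * γ)

/-- `ν` is the product (Bernoulli) measure on `Γ → κ` with one-dimensional marginal `κm`:
it is a probability measure giving every cylinder set the product of the marginals. -/
def IsBernoulliMeasure {Γ κ : Type*} [MeasurableSpace κ]
    (κm : Measure κ) (ν : Measure (Γ → κ)) : Prop :=
  IsProbabilityMeasure ν ∧
    ∀ (F : Finset Γ) (B : Γ → Set κ), (∀ γ, MeasurableSet (B γ)) →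
      ν {ω | ∀ γ ∈ F, ω γ ∈ B γ} = ∏ γ ∈ F, κm (B γ)

/-- The measure on `Fin d` with `P(i) = p i`. -/
noncomputable def discreteMeasure {d : ℕ} (p : Fin d → ℝ) : Measure (Fin d) :=
  ∑ i : Fin d, ENNReal.ofReal (p i) • Measure.dirac i

/-!
Approximate each `Yᵢ` in `ν` by a set `Cᵢ` depending only on the coordinates in a finite
`F ⊆ Γ`, and code points of `X` by `Φ x = (γ ↦ φ (f γ x))`. Since `Φ` intertwines `f` with the
shift, `f γ '' Φ⁻¹ Cᵢ ∩ Φ⁻¹ Cⱼ = Φ⁻¹ (shift γ '' Cᵢ ∩ Cⱼ)`, and this set depends only on the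
coordinates in the finite window `F' = F ∪ ⋃_{γ ∈ S} F γ⁻¹`. Choosing `φ` for `F'`, the laws of
`Φ` and of `ν` restricted to `F'` are close on each of the finitely many atoms, hence on every
set depending on `F'`; the remaining error is the approximation of `Yᵢ` by `Cᵢ`, which the
shift, preserving `ν`, does not increase.
-/

open scoped symmDiff
open Set

section Coding

variable {Γ X κ : Type*}

theorem image_eq_preimage_inv_of_action [Group Γ] {f : Γ → X → X} (hone : ∀ x, f 1 x = x)
    (hmul : ∀ γ₁ γ₂ x, f (γ₁ * γ₂) x = f γ₁ (f γ₂ x)) (γ : Γ) :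
    image (f γ) = preimage (f γ⁻¹) :=
  image_eq_preimage_of_inverse (fun x => by rw [← hmul, inv_mul_cancel, hone])
    (fun x => by rw [← hmul, mul_inv_cancel, hone])

theorem bernoulliShift_one [Group Γ] (ω : Γ → κ) : bernoulliShift 1 ω = ω := by
  ext; simp [bernoulliShift]

theorem bernoulliShift_mul [Group Γ] (γ₁ γ₂ : Γ) (ω : Γ → κ) :
    bernoulliShift (γ₁ * γ₂) ω = bernoulliShift γ₁ (bernoulliShift γ₂ ω) := by
  ext; simp [bernoulliShift, mul_assoc]

def codingMap (f : Γ → X → X) (φ : X → κ) (x : X) : Γ → κ := fun γ => φ (f γ x)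

theorem measurable_codingMap [MeasurableSpace X] [MeasurableSpace κ] {f : Γ → X → X}
    (hf : ∀ γ, Measurable (f γ)) {φ : X → κ} (hφ : Measurable φ) :
    Measurable (codingMap f φ) :=
  measurable_pi_lambda _ fun γ => hφ.comp (hf γ)

theorem codingMap_action [Group Γ] {f : Γ → X → X}
    (hmul : ∀ γ₁ γ₂ x, f (γ₁ * γ₂) x = f γ₁ (f γ₂ x)) (φ : X → κ) (γ : Γ) (x : X) :
    codingMap f φ (f γ x) = bernoulliShift γ (codingMap f φ x) := by
  ext δ; simp [codingMap, bernoulliShift, hmul]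

theorem image_preimage_codingMap [Group Γ] {f : Γ → X → X} (hone : ∀ x, f 1 x = x)
    (hmul : ∀ γ₁ γ₂ x, f (γ₁ * γ₂) x = f γ₁ (f γ₂ x)) (φ : X → κ) (γ : Γ) (C : Set (Γ → κ)) :
    f γ '' (codingMap f φ ⁻¹' C) = codingMap f φ ⁻¹' (bernoulliShift γ '' C) := by
  rw [image_eq_preimage_inv_of_action hone hmul,
    image_eq_preimage_inv_of_action bernoulliShift_one bernoulliShift_mul]
  ext x
  simp [codingMap_action hmul]

end Coding

section Bernoulli

theorem discreteMeasure_singleton {d : ℕ} (p : Fin d → ℝ) (j : Fin d) :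
    discreteMeasure p {j} = ENNReal.ofReal (p j) := by
  simp [discreteMeasure, Set.indicator_apply]

theorem isProbabilityMeasure_discreteMeasure {d : ℕ} {p : Fin d → ℝ} (hp : ∀ i, 0 ≤ p i)
    (hsum : ∑ i, p i = 1) : IsProbabilityMeasure (discreteMeasure p) := by
  constructor
  simp [discreteMeasure, ← ENNReal.ofReal_sum_of_nonneg fun i _ => hp i, hsum]

theorem IsBernoulliMeasure.measureReal_eq_prod {Γ : Type*} {d : ℕ} {p : Fin d → ℝ}
    (hp : ∀ i, 0 ≤ p i) {ν : Measure (Γ → Fin d)}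
    (hν : IsBernoulliMeasure (discreteMeasure p) ν) (F : Finset Γ) (α : Γ → Fin d) :
    ν.real {ω | ∀ γ ∈ F, ω γ = α γ} = ∏ γ ∈ F, p (α γ) := by
  have h := hν.2 F (fun γ => {α γ}) fun _ => measurableSet_singleton _
  simp only [mem_singleton_iff] at h
  simp [measureReal_def, h, discreteMeasure_singleton, ENNReal.toReal_prod, hp]

variable {Γ κ : Type*} [MeasurableSpace κ] {κm : Measure κ} [IsProbabilityMeasure κm]
  {ν : Measure (Γ → κ)}

theorem IsBernoulliMeasure.eq_infinitePi (hν : IsBernoulliMeasure κm ν) :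
    ν = Measure.infinitePi fun _ : Γ => κm :=
  Measure.eq_infinitePi _ fun s t ht => hν.2 s t ht

theorem bernoulliShift_eq_piCongrLeft [Group Γ] (γ : Γ) :
    bernoulliShift γ = MeasurableEquiv.piCongrLeft (fun _ : Γ => κ) (Equiv.mulRight γ⁻¹) := by
  ext ω δ
  simp [bernoulliShift, MeasurableEquiv.coe_piCongrLeft, Equiv.piCongrLeft_apply_eq_cast]

theorem IsBernoulliMeasure.measurePreserving_bernoulliShift [Group Γ]
    (hν : IsBernoulliMeasure κm ν) (γ : Γ) : MeasurePreserving (bernoulliShift γ) ν ν := by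
  rw [hν.eq_infinitePi, bernoulliShift_eq_piCongrLeft]
  exact ⟨MeasurableEquiv.measurable _, Measure.infinitePi_map_piCongrLeft (fun _ => κm) _⟩

end Bernoulli

section Approximation

theorem abs_measureReal_sub_le_measureReal_symmDiff {Y : Type*} [MeasurableSpace Y]
    (ν : Measure Y) [IsFiniteMeasure ν] (s t : Set Y) :
    |ν.real s - ν.real t| ≤ ν.real (s ∆ t) := by
  have key : ∀ s t : Set Y, ν.real s - ν.real t ≤ ν.real (s ∆ t) := fun s t => by
    have := (measureReal_mono (μ := ν) (show s ⊆ s ∆ t ∪ t from le_symmDiff_sup_right s t)).trans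
      (measureReal_union_le _ _)
    linarith
  exact abs_sub_le_iff.2 ⟨key s t, symmDiff_comm s t ▸ key t s⟩

theorem inter_symmDiff_inter_subset {Y : Type*} (A A' B B' : Set Y) :
    (A ∩ B) ∆ (A' ∩ B') ⊆ A ∆ A' ∪ B ∆ B' := by
  intro x
  simp only [mem_symmDiff, mem_inter_iff, mem_union]
  tauto

theorem abs_measureReal_preimage_inter_sub_le {Y : Type*} [MeasurableSpace Y] {ν : Measure Y}
    [IsFiniteMeasure ν] {g : Y → Y} (hg : MeasurePreserving g ν ν) {A A' : Set Y}
    (hA : NullMeasurableSet (A ∆ A') ν) (B B' : Set Y) :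
    |ν.real (g ⁻¹' A ∩ B) - ν.real (g ⁻¹' A' ∩ B')| ≤ ν.real (A ∆ A') + ν.real (B ∆ B') :=
  calc _ ≤ ν.real ((g ⁻¹' A ∩ B) ∆ (g ⁻¹' A' ∩ B')) :=
        abs_measureReal_sub_le_measureReal_symmDiff _ _ _
    _ ≤ ν.real (g ⁻¹' (A ∆ A') ∪ B ∆ B') :=
        measureReal_mono (preimage_symmDiff (f := g) A A' ▸ inter_symmDiff_inter_subset _ _ _ _)
    _ ≤ ν.real (g ⁻¹' (A ∆ A')) + ν.real (B ∆ B') := measureReal_union_le _ _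
    _ = ν.real (A ∆ A') + ν.real (B ∆ B') := by rw [hg.measureReal_preimage hA]

theorem exists_finset_dependsOn_measureReal_symmDiff_lt {ι : Type*} {α : ι → Type*}
    [∀ i, MeasurableSpace (α i)] (m : Measure (Π i, α i)) [IsFiniteMeasure m]
    {ι' : Type*} [Fintype ι'] {Y : ι' → Set (Π i, α i)} (hY : ∀ k, MeasurableSet (Y k))
    {ε : ℝ} (hε : 0 < ε) :
    ∃ (F : Finset ι) (C : ι' → Set (Π i, α i)),
      ∀ k, MeasurableSet (C k) ∧ DependsOn (· ∈ C k) F ∧ m.real (C k ∆ Y k) < ε := by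
  have hcyl : ∀ k, ∃ t ∈ measurableCylinders α, m (t ∆ Y k) < ENNReal.ofReal ε := fun k =>
    exists_measure_symmDiff_lt_of_generateFrom_isSetRing isSetRing_measurableCylinders
      ⟨{univ}, countable_singleton _, singleton_subset_iff.2 (univ_mem_measurableCylinders α),
        by simp⟩
      generateFrom_measurableCylinders.symm (hY k) (ENNReal.ofReal_pos.2 hε)
  classical
  choose C hC hCY using hcyl
  choose s S _ hCs using fun k => (mem_measurableCylinders _).1 (hC k)
  refine ⟨Finset.univ.sup s, C, fun k => ⟨.of_mem_measurableCylinders (hC k), ?_, ?_⟩⟩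
  · rw [hCs k]
    intro x y hxy
    exact congrArg (· ∈ S k) (funext fun i =>
      hxy i (Finset.mem_sup.2 ⟨k, Finset.mem_univ k, i.2⟩))
  · exact ENNReal.toReal_lt_of_lt_ofReal (hCY k)

end Approximation

section Cylinders

theorem abs_measureReal_sub_le_card_mul {α : Type*} [Finite α] [MeasurableSpace α]
    [MeasurableSingletonClass α] {m₁ m₂ : Measure α} [IsFiniteMeasure m₁] [IsFiniteMeasure m₂]
    {δ : ℝ} (h : ∀ a, |m₁.real {a} - m₂.real {a}| ≤ δ) (s : Set α) :
    |m₁.real s - m₂.real s| ≤ Nat.card α * δ := by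
  classical
  have := Fintype.ofFinite α
  rw [← s.coe_toFinset, ← sum_measureReal_singleton, ← sum_measureReal_singleton,
    ← Finset.sum_sub_distrib, Nat.card_eq_fintype_card, ← Finset.card_univ, ← nsmul_eq_mul]
  calc |∑ a ∈ s.toFinset, (m₁.real {a} - m₂.real {a})|
      ≤ ∑ a ∈ s.toFinset, |m₁.real {a} - m₂.real {a}| := Finset.abs_sum_le_sum_abs _ _
    _ ≤ ∑ a, |m₁.real {a} - m₂.real {a}| :=
        Finset.sum_le_sum_of_subset_of_nonneg (Finset.subset_univ _) fun _ _ _ => abs_nonneg _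
    _ ≤ Finset.univ.card • δ := Finset.sum_le_card_nsmul _ _ _ fun a _ => h a

variable {Γ κ : Type*}

theorem dependsOn_mem_preimage_bernoulliShift_inv_inter [Group Γ] [DecidableEq Γ]
    {F S : Finset Γ} {C C' : Set (Γ → κ)} (hC : DependsOn (· ∈ C) F)
    (hC' : DependsOn (· ∈ C') F) {γ : Γ} (hγ : γ ∈ S) :
    DependsOn (· ∈ bernoulliShift γ⁻¹ ⁻¹' C ∩ C')
      (F ∪ S.biUnion fun s => F.image (· * s⁻¹) : Finset Γ) := by
  have hshift : DependsOn (· ∈ bernoulliShift γ⁻¹ ⁻¹' C) ((· * γ⁻¹) '' F) :=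
    fun _ _ h => hC fun δ hδ => h _ (mem_image_of_mem _ hδ)
  refine fun ω ω' h => congrArg₂ And ((hshift.mono ?_) h) ((hC'.mono ?_) h)
  · intro x
    simp only [mem_image, Finset.coe_union, Finset.coe_biUnion, Finset.coe_image, mem_union,
      mem_iUnion]
    grind
  · simp

theorem preimage_restrict_image_of_dependsOn {F : Finset Γ} {D : Set (Γ → κ)}
    (hD : DependsOn (· ∈ D) F) : F.restrict ⁻¹' (F.restrict '' D) = D := by
  refine subset_antisymm ?_ (subset_preimage_image _ _)
  rintro ω ⟨ω', hω', hrestrict⟩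
  exact (hD fun γ hγ => congrFun hrestrict ⟨γ, hγ⟩).mp hω'

theorem preimage_restrict_singleton {F : Finset Γ} (α : Γ → κ) :
    F.restrict ⁻¹' ({F.restrict α} : Set (F → κ)) = {ω | ∀ γ ∈ F, ω γ = α γ} := by
  ext ω
  simp [funext_iff]

theorem abs_measureReal_preimage_sub_le_of_dependsOn [MeasurableSpace κ] [Finite κ]
    [MeasurableSingletonClass κ] [Nonempty κ] {X : Type*} [MeasurableSpace X]
    {μ : Measure X} [IsFiniteMeasure μ] {ν : Measure (Γ → κ)} [IsFiniteMeasure ν]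
    {Ψ : X → Γ → κ} (hΨ : Measurable Ψ) {F : Finset Γ} {δ : ℝ}
    (hcyl : ∀ α : Γ → κ, |μ.real (Ψ ⁻¹' {ω | ∀ γ ∈ F, ω γ = α γ}) -
      ν.real {ω | ∀ γ ∈ F, ω γ = α γ}| ≤ δ)
    {D : Set (Γ → κ)} (hD : DependsOn (· ∈ D) F) :
    |μ.real (Ψ ⁻¹' D) - ν.real D| ≤ Nat.card (F → κ) * δ := by
  have hR : Measurable (F.restrict : (Γ → κ) → F → κ) := Finset.measurable_restrict _
  have hmap (s : Set (F → κ)) :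
      (μ.map (F.restrict ∘ Ψ)).real s = μ.real (Ψ ⁻¹' (F.restrict ⁻¹' s)) ∧
        (ν.map F.restrict).real s = ν.real (F.restrict ⁻¹' s) :=
    ⟨map_measureReal_apply (hR.comp hΨ) s.toFinite.measurableSet,
      map_measureReal_apply hR s.toFinite.measurableSet⟩
  rw [← preimage_restrict_image_of_dependsOn hD, ← (hmap _).1, ← (hmap _).2]
  refine abs_measureReal_sub_le_card_mul (fun a => ?_) _
  obtain ⟨α, rfl⟩ : ∃ α : Γ → κ, F.restrict α = a :=
    ⟨Function.extend Subtype.val a fun _ => Classical.arbitrary κ,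
      funext fun x => Subtype.val_injective.extend_apply _ _ x⟩
  rw [(hmap _).1, (hmap _).2, preimage_restrict_singleton]
  exact hcyl α

end Cylinders

theorem weakly_contains_bernoulli_of_approx_general
    {Γ : Type*} [Group Γ]
    {X : Type*} [MeasurableSpace X]
    (μ : Measure X) [IsProbabilityMeasure μ]
    (f : Γ → X → X) (hf : IsPMPAction f μ)
    {d : ℕ} (p : Fin d → ℝ) (hp : ∀ i, 0 < p i) (hsum : ∑ i, p i = 1)
    (happrox : ∀ (F : Finset Γ) (δ : ℝ), 0 < δ →
      ∃ φ : X → Fin d, Measurable φ ∧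
        ∀ α : Γ → Fin d,
          |(μ {x | ∀ γ ∈ F, φ (f γ x) = α γ}).toReal - ∏ γ ∈ F, p (α γ)| < δ)
    (ν : Measure (Γ → Fin d)) (hν : IsBernoulliMeasure (discreteMeasure p) ν) :
    WeaklyContains f μ (bernoulliShift (κ := Fin d)) ν := by
  classical
  obtain ⟨hmp, hone, hmul⟩ := hf
  have : NeZero d := ⟨by rintro rfl; simp at hsum⟩
  have := isProbabilityMeasure_discreteMeasure (fun i => (hp i).le) hsum
  have := hν.1
  intro n Y hY S ε hε
  obtain ⟨F, C, hC⟩ := exists_finset_dependsOn_measureReal_symmDiff_lt ν hY (ε := ε / 4)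
    (by positivity)
  let N := Nat.card ((F ∪ S.biUnion fun s => F.image (· * s⁻¹) : Finset Γ) → Fin d)
  obtain ⟨φ, hφ, hφF⟩ := happrox _ (ε / (2 * (N + 1))) (by positivity)
  have hΦ := measurable_codingMap (fun γ => (hmp γ).measurable) hφ
  refine ⟨fun i => codingMap f φ ⁻¹' C i, fun i => hΦ (hC i).1, fun i j γ hγ => ?_⟩
  rw [image_preimage_codingMap hone hmul, ← preimage_inter,
    image_eq_preimage_inv_of_action bernoulliShift_one bernoulliShift_mul, ← measureReal_def,
    ← measureReal_def]
  set D := bernoulliShift γ⁻¹ ⁻¹' C i ∩ C j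
  have hμD : |μ.real (codingMap f φ ⁻¹' D) - ν.real D| ≤ N * (ε / (2 * (N + 1))) :=
    abs_measureReal_preimage_sub_le_of_dependsOn hΦ
      (fun α => hν.measureReal_eq_prod (fun i => (hp i).le) _ α ▸ (hφF α).le)
      (dependsOn_mem_preimage_bernoulliShift_inv_inter (hC i).2.1 (hC j).2.1 hγ)
  have hνD : |ν.real D - ν.real (bernoulliShift γ⁻¹ ⁻¹' Y i ∩ Y j)| ≤ ε / 4 + ε / 4 :=
    (abs_measureReal_preimage_inter_sub_le (hν.measurePreserving_bernoulliShift γ⁻¹)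
      ((hC i).1.symmDiff (hY i)).nullMeasurableSet _ _).trans
      (add_le_add (hC i).2.2.le (hC j).2.2.le)
  have hN : (N : ℝ) * (ε / (2 * (N + 1))) < ε / 2 := by field_simp; nlinarith
  linarith [abs_sub_le (μ.real (codingMap f φ ⁻¹' D)) (ν.real D)
    (ν.real (bernoulliShift γ⁻¹ ⁻¹' Y i ∩ Y j))]

/-- **Lemma (reduction).** If the finite-dimensional distributions of the Bernoulli base can
be simulated by Borel maps `φ : X → {1,…,d}` with arbitrarily small error, then `f` weakly
contains the Bernoulli action `κ(p₁,…,p_d)^Γ`. -/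
theorem weakly_contains_bernoulli_of_approx
    {Γ : Type*} [Group Γ] [Countable Γ]
    {X : Type*} [MeasurableSpace X] [StandardBorelSpace X]
    (μ : Measure X) [IsProbabilityMeasure μ]
    (f : Γ → X → X) (hf : IsPMPAction f μ)
    {d : ℕ} (p : Fin d → ℝ) (hp : ∀ i, 0 < p i) (hsum : ∑ i, p i = 1)
    (happrox : ∀ (F : Finset Γ) (δ : ℝ), 0 < δ →
      ∃ φ : X → Fin d, Measurable φ ∧
        ∀ α : Γ → Fin d,
          |(μ {x | ∀ γ ∈ F, φ (f γ x) = α γ}).toReal - ∏ γ ∈ F, p (α γ)| < δ)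
    (ν : Measure (Γ → Fin d)) (hν : IsBernoulliMeasure (discreteMeasure p) ν) :
    WeaklyContains f μ (bernoulliShift (κ := Fin d)) ν :=
  weakly_contains_bernoulli_of_approx_general μ f hf p hp hsum happrox ν hν
end

section
/- Let f be an ergodic p.m.p. action of the countable group Γ by homeomorphisms on a compact metrizable space X with invariant Borel probability measure μ, let 0 < λ < 1, and let A_n be an almost invariant sequence of Borel sets with lim_{n→∞} μ(A_n) = λ. Define measures μ_n on X by μ_n(Y) = μ(A_n ∩ Y) for Borel Y ⊆ X. Then μ_n converges to λμ in the weak* topology. -/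
open MeasureTheory Filter Topology

/-- The action `f` is ergodic: every invariant Borel set is null or conull. -/
def IsErgodicAction {Γ X : Type*} [MeasurableSpace X]
    (f : Γ → X → X) (μ : Measure X) : Prop :=
  ∀ A : Set X, MeasurableSet A → (∀ γ : Γ, f γ ⁻¹' A = A) → μ A = 0 ∨ μ A = 1

/-- A sequence of Borel sets `A n` is almost invariant:
`μ (f_γ A_n ∆ A_n) → 0` for every `γ`. -/
def AlmostInvariantSeq {Γ X : Type*} [MeasurableSpace X]
    (f : Γ → X → X) (μ : Measure X) (A : ℕ → Set X) : Prop :=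
  ∀ γ : Γ, Tendsto (fun n => μ (symmDiff (f γ '' A n) (A n))) atTop (nhds 0)

/-- A sequence of sets `A n` is trivial: `μ(A_n)(1 - μ(A_n)) → 0`. -/
def TrivialSeq {X : Type*} [MeasurableSpace X] (μ : Measure X) (A : ℕ → Set X) : Prop :=
  Tendsto (fun n => μ (A n) * (1 - μ (A n))) atTop (nhds 0)

/-- The action `f` is strongly ergodic: it is ergodic and every almost invariant sequence of
Borel sets is trivial. -/
def IsStronglyErgodic {Γ X : Type*} [MeasurableSpace X]
    (f : Γ → X → X) (μ : Measure X) : Prop :=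
  IsErgodicAction f μ ∧
    ∀ A : ℕ → Set X, (∀ n, MeasurableSet (A n)) →
      AlmostInvariantSeq f μ A → TrivialSeq μ A


/-!
Regard `g` as a vector of `L²(μ)`. The closed convex hull `K` of its Koopman orbit
`{g ∘ f γ}` has a unique point of least norm, which is therefore fixed by every `f γ`, hence
a.e. constant by ergodicity; the constant is `∫ g`, because integration is constant on `K`.
On the other hand `⟪1_{A n}, g - g ∘ f γ⟫ = ∫_{A n} g - ∫_{f γ '' A n} g` is at most
`‖g‖_∞ μ(f γ '' A n ∆ A n) → 0`, and since the `1_{A n}` have norm at most `1`, the set of `h`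
with `⟪1_{A n}, g - h⟫ → 0` is closed and convex. So it contains `K`, in particular the constant
`∫ g`, which gives `∫_{A n} g - μ(A n) ∫ g → 0`.
-/

open scoped symmDiff ENNReal

section Convexity

variable {E F : Type*} [NormedAddCommGroup E] [NormedSpace ℝ E]
  [NormedAddCommGroup F] [NormedSpace ℝ F]

theorem Convex.eq_of_isMinOn_norm [StrictConvexSpace ℝ E] {K : Set E} (hK : Convex ℝ K)
    {v w : E} (hv : v ∈ K) (hmin : IsMinOn (‖·‖) K v) (hw : w ∈ K) (hwv : ‖w‖ ≤ ‖v‖) :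
    w = v := by
  have hnorm : ‖w‖ = ‖v‖ := le_antisymm hwv (hmin hw)
  have hmid : ‖v‖ ≤ ‖w + v‖ / 2 := by
    have hhalf : ‖v‖ ≤ ‖(1 / 2 : ℝ) • w + (1 / 2 : ℝ) • v‖ :=
      hmin (hK hw hv (by norm_num) (by norm_num) (by norm_num))
    rwa [← smul_add, norm_smul, Real.norm_of_nonneg (by norm_num), one_div_mul_eq_div] at hhalf
  exact eq_of_norm_eq_of_norm_add_eq hnorm
    (le_antisymm (norm_add_le w v) (by linarith))

theorem ContinuousLinearMap.eq_of_mem_closure_convexHull (φ : E →L[ℝ] F) {O : Set E} {c : F}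
    (hO : ∀ y ∈ O, φ y = c) {y : E} (hy : y ∈ closure (convexHull ℝ O)) : φ y = c :=
  closure_minimal (convexHull_min hO ((convex_singleton c).linear_preimage φ.toLinearMap))
    (isClosed_singleton.preimage φ.continuous) hy

theorem tendsto_apply_sub_of_mem_closure_convexHull {ι : Type*} {l : Filter ι}
    {φ : ι → E →L[ℝ] F} {C : ℝ} (hφ : ∀ i, ‖φ i‖ ≤ C) {x : E} {O : Set E}
    (hO : ∀ y ∈ O, Tendsto (fun i => φ i (x - y)) l (𝓝 0)) {y : E}
    (hy : y ∈ closure (convexHull ℝ O)) : Tendsto (fun i => φ i (x - y)) l (𝓝 0) := by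
  have hequi : Equicontinuous ((↑) ∘ φ : ι → E → F) :=
    ((NormedSpace.equicontinuous_TFAE φ).out 5 1).mp (⟨C, hφ⟩ : ∃ C, ∀ i, ‖φ i‖ ≤ C)
  have hclosed : IsClosed {y | Tendsto (fun i => φ i (x - y)) l (𝓝 0)} :=
    (hequi.isClosed_setOfPred_tendsto continuous_const).preimage
      (continuous_const.sub continuous_id)
  have hconvex : Convex ℝ {y | Tendsto (fun i => φ i (x - y)) l (𝓝 0)} := by
    intro y hy z hz a b _ _ hab
    have hxyz : x - (a • y + b • z) = a • (x - y) + b • (x - z) := by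
      linear_combination (norm := module) -hab • x
    have hsum := (hy.const_smul a).add (hz.const_smul b)
    rw [smul_zero, smul_zero, add_zero] at hsum
    simpa only [Set.mem_ofPred_eq, hxyz, map_add, map_smul] using hsum
  exact closure_minimal (convexHull_min hO hconvex) hclosed hy

end Convexity

section Hilbert

variable {E : Type*} [NormedAddCommGroup E] [InnerProductSpace ℝ E] [CompleteSpace E]

/-- Alaoglu–Birkhoff; the common fixed point is the point of least norm of the closed convex
hull. -/
theorem exists_forall_apply_eq_mem_closure_convexHull
    {ι : Type*} (T : ι → E →ₗᵢ[ℝ] E) {O : Set E} (hO : O.Nonempty)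
    (hTO : ∀ i, Set.MapsTo (T i) O O) :
    ∃ v ∈ closure (convexHull ℝ O), ∀ i, T i v = v := by
  set K := closure (convexHull ℝ O)
  have hK : Convex ℝ K := (convex_convexHull ℝ O).closure
  have hTK : ∀ i, Set.MapsTo (T i) K K := fun i => by
    refine Set.MapsTo.closure (fun z hz => ?_) (T i).continuous
    have himage := (T i).toLinearMap.image_convexHull O
    exact convexHull_mono (hTO i).image_subset (himage ▸ Set.mem_image_of_mem _ hz)
  obtain ⟨v, hvK, hv⟩ := exists_norm_eq_iInf_of_complete_convex
    (hO.mono (subset_convexHull ℝ O)).closure isClosed_closure.isComplete hK 0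
  simp only [zero_sub, norm_neg] at hv
  have hbdd : BddBelow (Set.range fun w : K => ‖(w : E)‖) :=
    ⟨0, Set.forall_mem_range.2 fun _ => norm_nonneg _⟩
  have hmin : IsMinOn (‖·‖) K v := fun w hw => show ‖v‖ ≤ ‖w‖ from hv ▸ ciInf_le hbdd ⟨w, hw⟩
  exact ⟨v, hvK, fun i => hK.eq_of_isMinOn_norm hvK hmin (hTK i hvK) ((T i).norm_map v).le⟩

end Hilbert

section SetIntegral

variable {X E : Type*} [MeasurableSpace X] {μ : Measure X} [NormedAddCommGroup E]
  [NormedSpace ℝ E]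

theorem norm_setIntegral_sub_setIntegral_le [IsFiniteMeasure μ] {g : X → E}
    (hg : Integrable g μ) {C : ℝ} (hC : ∀ x, ‖g x‖ ≤ C) {S T : Set X} (hS : MeasurableSet S)
    (hT : MeasurableSet T) :
    ‖∫ x in S, g x ∂μ - ∫ x in T, g x ∂μ‖ ≤ C * μ.real (S ∆ T) := by
  rw [← integral_indicator hS, ← integral_indicator hT,
    ← integral_sub (hg.indicator hS) (hg.indicator hT), mul_comm, ← smul_eq_mul,
    ← integral_indicator_const C (hS.symmDiff hT)]
  refine norm_integral_le_of_norm_le ((integrable_const C).indicator (hS.symmDiff hT))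
    (ae_of_all _ fun x => ?_)
  rw [← Set.apply_indicator_symmDiff norm_neg, norm_indicator_eq_indicator_norm]
  exact Set.indicator_le_indicator (hC x)

end SetIntegral

namespace MeasureTheory.Lp

variable {X Y : Type*} [MeasurableSpace X] [MeasurableSpace Y] {μ : Measure X} {ν : Measure Y}
  {e : X → Y}

theorem integral_compMeasurePreserving {E : Type*} [NormedAddCommGroup E] [NormedSpace ℝ E]
    {p : ℝ≥0∞} (he : MeasurePreserving e μ ν) (w : Lp E p ν) :
    ∫ x, compMeasurePreserving e he w x ∂μ = ∫ y, w y ∂ν := by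
  have hw : AEStronglyMeasurable w (μ.map e) := by
    rw [he.map_eq]; exact Lp.aestronglyMeasurable w
  rw [integral_congr_ae (coeFn_compMeasurePreserving w he), Function.comp_def,
    ← integral_map he.aemeasurable hw, he.map_eq]

theorem inner_indicatorConstLp_compMeasurePreserving (he : MeasurePreserving e μ ν)
    (hemb : MeasurableEmbedding e) {A : Set X} (hA : MeasurableSet A) (hμA : μ A ≠ ⊤)
    (w : Lp ℝ 2 ν) :
    inner ℝ (indicatorConstLp 2 hA hμA (1 : ℝ)) (compMeasurePreserving e he w) =
      ∫ y in e '' A, w y ∂ν := by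
  rw [L2.inner_indicatorConstLp_one, he.setIntegral_image_emb hemb]
  exact integral_congr_ae (ae_restrict_of_ae (coeFn_compMeasurePreserving w he))

end MeasureTheory.Lp

namespace IsPMPAction

variable {Γ X : Type*} [Group Γ] [MeasurableSpace X] {μ : Measure X} {f : Γ → X → X}

theorem measurableEmbedding (hf : IsPMPAction f μ) (γ : Γ) : MeasurableEmbedding (f γ) :=
  MeasurableEquiv.measurableEmbedding
    { toFun := f γ
      invFun := f γ⁻¹
      left_inv := fun x => by rw [← hf.2.2, inv_mul_cancel, hf.2.1]
      right_inv := fun x => by rw [← hf.2.2, mul_inv_cancel, hf.2.1]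
      measurable_toFun := (hf.1 γ).measurable
      measurable_invFun := (hf.1 γ⁻¹).measurable }

noncomputable def koopman (hf : IsPMPAction f μ) (γ : Γ) : Lp ℝ 2 μ →ₗᵢ[ℝ] Lp ℝ 2 μ :=
  Lp.compMeasurePreservingₗᵢ ℝ (f γ) (hf.1 γ)

theorem koopman_apply (hf : IsPMPAction f μ) (γ : Γ) (w : Lp ℝ 2 μ) :
    hf.koopman γ w = Lp.compMeasurePreserving (f γ) (hf.1 γ) w :=
  rfl

theorem koopman_apply_koopman (hf : IsPMPAction f μ) (γ δ : Γ) (w : Lp ℝ 2 μ) :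
    hf.koopman γ (hf.koopman δ w) = hf.koopman (δ * γ) w := by
  have hcomp : f δ ∘ f γ = f (δ * γ) := funext fun x => (hf.2.2 δ γ x).symm
  rw [koopman_apply, koopman_apply, koopman_apply, ← Lp.compMeasurePreserving_comp_apply]
  congr 1
  simp only [hcomp]

end IsPMPAction

theorem AlmostInvariantSeq.tendsto_setIntegral_sub_setIntegral_image {Γ X E : Type*} [Group Γ]
    [MeasurableSpace X] {μ : Measure X} [IsFiniteMeasure μ] [NormedAddCommGroup E]
    [NormedSpace ℝ E] {f : Γ → X → X} {A : ℕ → Set X} (hai : AlmostInvariantSeq f μ A)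
    (hf : IsPMPAction f μ) (hA : ∀ n, MeasurableSet (A n)) {g : X → E} (hg : Integrable g μ)
    {C : ℝ} (hC : ∀ x, ‖g x‖ ≤ C) (γ : Γ) :
    Tendsto (fun n => ∫ x in A n, g x ∂μ - ∫ x in f γ '' A n, g x ∂μ) atTop (𝓝 0) := by
  have hsymm : Tendsto (fun n => μ.real (A n ∆ (f γ '' A n))) atTop (𝓝 0) := by
    simpa only [measureReal_def, symmDiff_comm, Function.comp_def, ENNReal.toReal_zero] using
      (ENNReal.tendsto_toReal ENNReal.zero_ne_top).comp (hai γ)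
  refine squeeze_zero_norm (fun n => norm_setIntegral_sub_setIntegral_le hg hC (hA n)
    ((hf.measurableEmbedding γ).measurableSet_image.2 (hA n))) ?_
  simpa using hsymm.const_mul C

namespace IsErgodicAction

variable {Γ X : Type*} [Group Γ] [Countable Γ] [MeasurableSpace X] {μ : Measure X}
  [IsProbabilityMeasure μ] {f : Γ → X → X}

/-- Ergodicity is stated for strictly invariant sets; since `Γ` is countable, an a.e.-invariant
set `B` differs by a null set from the strictly invariant set `⋂ γ, f γ ⁻¹' B`. -/
theorem ae_mem_or_ae_notMem (herg : IsErgodicAction f μ) (hf : IsPMPAction f μ) {B : Set X}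
    (hB : MeasurableSet B) (hinv : ∀ γ, f γ ⁻¹' B =ᵐ[μ] B) :
    (∀ᵐ x ∂μ, x ∈ B) ∨ ∀ᵐ x ∂μ, x ∉ B := by
  set B' := ⋂ γ, f γ ⁻¹' B
  have hB'inv : ∀ δ, f δ ⁻¹' B' = B' := fun δ => by
    have hcomp : ∀ γ, f γ ∘ f δ = f (γ * δ) := fun γ => funext fun x => (hf.2.2 γ δ x).symm
    simp only [B', Set.preimage_iInter, ← Set.preimage_comp, hcomp]
    exact (mul_right_surjective δ).iInter_comp fun γ => f γ ⁻¹' B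
  have hB'B : B' =ᵐ[μ] B := by
    simpa only [Set.iInter_const] using Filter.EventuallyEq.countable_iInter hinv
  rcases herg B' (.iInter fun γ => (hf.1 γ).measurable hB) hB'inv with h | h <;>
    rw [measure_congr hB'B] at h
  · exact .inr (measure_eq_zero_iff_ae_notMem.1 h)
  · exact .inl ((ae_mem_iff_measure_eq hB.nullMeasurableSet).2 (by rw [h, measure_univ]))

theorem exists_ae_eq_const_of_ae_eq_comp (herg : IsErgodicAction f μ) (hf : IsPMPAction f μ)
    {Y : Type*} [MeasurableSpace Y] [Nonempty Y] [MeasurableSpace.CountablySeparated Y]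
    {v : X → Y} (hv : Measurable v) (hinv : ∀ γ, v ∘ f γ =ᵐ[μ] v) :
    ∃ c, v =ᵐ[μ] Function.const X c :=
  exists_eventuallyEq_const_of_forall_separating MeasurableSet fun U hU =>
    herg.ae_mem_or_ae_notMem hf (B := v ⁻¹' U) (hv hU) fun γ =>
      ((hinv γ).mono fun _ hx => Iff.of_eq (congrArg (· ∈ U) hx)).set_eq

theorem exists_mem_closure_convexHull_ae_eq_integral (herg : IsErgodicAction f μ)
    (hf : IsPMPAction f μ) (w : Lp ℝ 2 μ) :
    ∃ v ∈ closure (convexHull ℝ (Set.range fun γ => hf.koopman γ w)),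
      v =ᵐ[μ] Function.const X (∫ x, w x ∂μ) := by
  obtain ⟨v, hvO, hvfix⟩ := exists_forall_apply_eq_mem_closure_convexHull hf.koopman
    (O := Set.range fun γ => hf.koopman γ w) (Set.range_nonempty _) fun γ => by
      rintro _ ⟨δ, rfl⟩
      exact ⟨δ * γ, (hf.koopman_apply_koopman γ δ w).symm⟩
  obtain ⟨c, hc⟩ := herg.exists_ae_eq_const_of_ae_eq_comp hf (Lp.stronglyMeasurable v).measurable
    fun γ => (Lp.coeFn_compMeasurePreserving v (hf.1 γ)).symm.trans
      (by rw [← hf.koopman_apply, hvfix γ])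
  set one : Lp ℝ 2 μ := indicatorConstLp 2 MeasurableSet.univ (measure_ne_top μ _) 1
  have hint : ∀ u : Lp ℝ 2 μ, innerSL ℝ one u = ∫ x, u x ∂μ := fun u => by
    rw [innerSL_apply_apply, L2.inner_indicatorConstLp_one, setIntegral_univ]
  have hv : ∫ x, v x ∂μ = ∫ x, w x ∂μ := by
    rw [← hint, ← hint]
    refine (innerSL ℝ one).eq_of_mem_closure_convexHull ?_ hvO
    rintro _ ⟨γ, rfl⟩
    rw [hint, hint]
    exact Lp.integral_compMeasurePreserving (hf.1 γ) w
  refine ⟨v, hvO, hc.trans ?_⟩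
  rw [← hv, integral_congr_ae hc]
  simp

theorem tendsto_setIntegral_sub_measureReal_mul_integral (herg : IsErgodicAction f μ)
    (hf : IsPMPAction f μ) {A : ℕ → Set X} (hA : ∀ n, MeasurableSet (A n))
    (hai : AlmostInvariantSeq f μ A) {g : X → ℝ}
    (hg : AEStronglyMeasurable g μ) {C : ℝ} (hC : ∀ x, ‖g x‖ ≤ C) :
    Tendsto (fun n => ∫ x in A n, g x ∂μ - μ.real (A n) * ∫ x, g x ∂μ) atTop (𝓝 0) := by
  have hgL2 : MemLp g 2 μ := MemLp.of_bound hg C (ae_of_all _ hC)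
  set w := hgL2.toLp g
  obtain ⟨v, hvO, hv⟩ := herg.exists_mem_closure_convexHull_ae_eq_integral hf w
  set a : ℕ → Lp ℝ 2 μ := fun n => indicatorConstLp 2 (hA n) (measure_ne_top μ _) 1
  have ha : ∀ n, ‖innerSL ℝ (a n)‖ ≤ 1 := fun n => by
    refine (innerSL_apply_norm ℝ (a n)).trans_le (norm_indicatorConstLp_le.trans ?_)
    rw [norm_one, one_mul]
    exact Real.rpow_le_one measureReal_nonneg measureReal_le_one (by norm_num)
  have hw : ∀ s, ∫ x in s, w x ∂μ = ∫ x in s, g x ∂μ := fun s =>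
    integral_congr_ae (ae_restrict_of_ae hgL2.coeFn_toLp)
  have horbit : ∀ y ∈ Set.range fun γ => hf.koopman γ w,
      Tendsto (fun n => innerSL ℝ (a n) (w - y)) atTop (𝓝 0) := by
    rintro _ ⟨γ, rfl⟩
    simp only [innerSL_apply_apply, inner_sub_right, a, L2.inner_indicatorConstLp_one,
      hf.koopman_apply, hw,
      Lp.inner_indicatorConstLp_compMeasurePreserving (hf.1 γ) (hf.measurableEmbedding γ)]
    exact hai.tendsto_setIntegral_sub_setIntegral_image hf hA (hgL2.integrable one_le_two) hC γ
  refine (tendsto_apply_sub_of_mem_closure_convexHull ha horbit hvO).congr fun n => ?_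
  rw [innerSL_apply_apply, inner_sub_right, L2.inner_indicatorConstLp_one,
    L2.inner_indicatorConstLp_one, hw, integral_congr_ae (ae_restrict_of_ae hv)]
  simp only [Function.const_apply, setIntegral_const, smul_eq_mul]
  rw [integral_congr_ae hgL2.coeFn_toLp]

end IsErgodicAction

theorem restrict_almostInvariant_tendsto_smul_general
    {Γ : Type*} [Group Γ] [Countable Γ]
    {X : Type*} [TopologicalSpace X] [CompactSpace X]
    [MeasurableSpace X] [BorelSpace X]
    (μ : Measure X) [IsProbabilityMeasure μ]
    (f : Γ → X → X) (hf : IsPMPAction f μ)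
    (herg : IsErgodicAction f μ)
    (lam : ℝ)
    (A : ℕ → Set X) (hA : ∀ n, MeasurableSet (A n))
    (hai : AlmostInvariantSeq f μ A)
    (hlim : Tendsto (fun n => (μ (A n)).toReal) atTop (nhds lam)) :
    ∀ g : X → ℝ, Continuous g →
      Tendsto (fun n => ∫ x, g x ∂(μ.restrict (A n))) atTop (nhds (lam * ∫ x, g x ∂μ)) := by
  intro g hg
  obtain ⟨C, hC⟩ := isCompact_univ.exists_bound_of_continuousOn hg.continuousOn
  have hdiff := herg.tendsto_setIntegral_sub_measureReal_mul_integral hf hA hai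
    hg.aestronglyMeasurable fun x => hC x (Set.mem_univ x)
  simpa [measureReal_def] using hdiff.add (hlim.mul_const (∫ x, g x ∂μ))

/-- **Lemma (Schmidt).** Let `f` be an ergodic p.m.p. action by homeomorphisms on a compact
metrizable space, and `A n` an almost invariant sequence with `μ(A n) → λ`, `0 < λ < 1`.
Then the measures `μ_n(Y) = μ(A_n ∩ Y)` weak*-converge to `λ·μ`. -/
theorem restrict_almostInvariant_tendsto_smul
    {Γ : Type*} [Group Γ] [Countable Γ]
    {X : Type*} [TopologicalSpace X] [CompactSpace X] [TopologicalSpace.MetrizableSpace X]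
    [MeasurableSpace X] [BorelSpace X]
    (μ : Measure X) [IsProbabilityMeasure μ]
    (f : Γ → X → X) (hf : IsPMPAction f μ) (hcont : ∀ γ : Γ, Continuous (f γ))
    (hhomeo : ∀ γ : Γ, ∃ h : X ≃ₜ X, ⇑h = f γ)
    (herg : IsErgodicAction f μ)
    (lam : ℝ) (h0 : 0 < lam) (h1 : lam < 1)
    (A : ℕ → Set X) (hA : ∀ n, MeasurableSet (A n))
    (hai : AlmostInvariantSeq f μ A)
    (hlim : Tendsto (fun n => (μ (A n)).toReal) atTop (nhds lam)) :
    ∀ g : X → ℝ, Continuous g →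
      Tendsto (fun n => ∫ x, g x ∂(μ.restrict (A n))) atTop (nhds (lam * ∫ x, g x ∂μ)) :=
  restrict_almostInvariant_tendsto_smul_general μ f hf herg lam A hA hai hlim
end
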